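/- If Z = [zᵢⱼ] ∈ ℝ^{n×n} is symmetric positive semi-definite, then the Hadamard exponential matrix [e^{zᵢⱼ}] is symmetric positive semi-definite. -/

import Mathlib

/-!
Expand `exp z = ∑ zᵏ / k!`. By the Schur product theorem every Hadamard power `[zᵢⱼᵏ]` of a
positive semidefinite matrix is positive semidefinite, and the positive semidefinite matrices form a
closed convex cone, so the entrywise limit of the nonnegative combinations `∑ₖ [zᵢⱼᵏ] / k!` stays in it.
-/

open Matrix

namespace Matrix

section Closed

variable {ι R : Type*} [Ring R] [PartialOrder R] [StarRing R] [TopologicalSpace R]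
  [ContinuousAdd R] [ContinuousMul R] [ContinuousStar R] [OrderClosedTopology R]

theorem isClosed_setOf_posSemidef : IsClosed {A : Matrix ι ι R | A.PosSemidef} := by
  simp only [PosSemidef, Set.ofPred_and, Set.ofPred_forall]
  refine (isClosed_eq continuous_id.matrix_conjTranspose continuous_id).inter
    (isClosed_iInter fun x => isClosed_le continuous_const ?_)
  unfold Finsupp.sum
  fun_prop

theorem PosSemidef.of_hasSum [AddLeftMono R] {κ : Type*} {M : κ → Matrix ι ι R}
    {A : Matrix ι ι R} (hM : ∀ k, (M k).PosSemidef) (hA : HasSum M A) : A.PosSemidef :=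
  isClosed_setOf_posSemidef.mem_of_tendsto hA <|
    .of_forall fun s => posSemidef_sum s fun k _ => hM k

end Closed

section HadamardPower

open scoped ComplexOrder

variable {𝕜 ι : Type*} [RCLike 𝕜] [Finite ι]

theorem PosSemidef.map_pow {A : Matrix ι ι 𝕜} (hA : A.PosSemidef) (k : ℕ) :
    (A.map (· ^ k)).PosSemidef := by
  induction k with
  | zero =>
    convert posSemidef_vecMulVec_self_star (1 : ι → 𝕜) using 1
    ext; simp [vecMulVec]
  | succ k ih =>
    convert ih.hadamard hA using 1
    ext; simp [pow_succ]

theorem PosSemidef.map_of_hasSum {A : Matrix ι ι 𝕜} (hA : A.PosSemidef) {a : ℕ → ℝ}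
    (ha : ∀ k, 0 ≤ a k) {f : 𝕜 → 𝕜} (hf : ∀ x, HasSum (fun k => a k • x ^ k) (f x)) :
    (A.map f).PosSemidef :=
  PosSemidef.of_hasSum (fun k => (hA.map_pow k).smul (ha k))
    (Pi.hasSum.2 fun i => Pi.hasSum.2 fun j => hf (A i j))

end HadamardPower

end Matrix

theorem hadamard_exp_posSemidef {n : ℕ} (Z : Matrix (Fin n) (Fin n) ℝ)
    (hZ : Z.PosSemidef) :
    (Matrix.of fun i j => Real.exp (Z i j)).PosSemidef :=
  hZ.map_of_hasSum (a := fun k => (k.factorial : ℝ)⁻¹) (fun k => by positivity) fun x => by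
    simpa [Real.exp_eq_exp_ℝ, div_eq_inv_mul] using NormedSpace.expSeries_div_hasSum_exp x
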